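/- arXiv:math/0409485 — 8 statements merged into one kernel-verified Lean document; each statement's English description precedes it below -/
import Mathlib

section
/- There exists a map γ* : Ω → G such that Φ(t, ω, γ*(ω)) = γ*(θ_t ω) for every t ≥ 0 and every ω ∈ Ω (a generalized fixed point of the cocycle Φ). -/
open Filter Topology

/-- Existence of a generalized fixed point of the cocycle `Φ` over the flow `θ`. -/
theorem generalized_fixed_point_exists
    {Ω G : Type*} [MetricSpace G] [CompleteSpace G] [Nonempty G]
    (θ : ℝ → Ω → Ω) (Φ : ℝ → Ω → G → G)
    (hθ0 : θ 0 = id)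
    (hθadd : ∀ t s : ℝ, θ (t + s) = θ t ∘ θ s)
    (M : ℝ) (hM : 0 ≤ M) (hbdd : ∀ x y : G, dist x y ≤ M)
    (hΦ0 : ∀ (ω : Ω) (x : G), Φ 0 ω x = x)
    (hcoc : ∀ t₁ t₂ : ℝ, 0 ≤ t₁ → 0 ≤ t₂ → ∀ (ω : Ω) (x : G),
      Φ (t₁ + t₂) ω x = Φ t₂ (θ t₁ ω) (Φ t₁ ω x))
    (hcont : ∀ t : ℝ, 0 ≤ t → ∀ ω : Ω, Continuous fun x : G => Φ t ω x)
    (k : ℝ) (hk : k < 0)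
    (hcontr : ∀ (ω : Ω) (x y : G),
      dist (Φ 1 ω x) (Φ 1 ω y) ≤ Real.exp k * dist x y) :
    ∃ γ : Ω → G, ∀ t : ℝ, 0 ≤ t → ∀ ω : Ω, Φ t ω (γ ω) = γ (θ t ω) := by
  obtain ⟨x₀⟩ := ‹Nonempty G›
  have hek : Real.exp k < 1 := Real.exp_lt_one_iff.mpr hk
  have hek0 : 0 ≤ Real.exp k := (Real.exp_pos k).le
  -- flow identities
  have hθ : ∀ (a b : ℝ) (ω : Ω), θ a (θ b ω) = θ (a + b) ω := by
    intro a b ω; rw [hθadd a b]; rfl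
  have hθid : ∀ (ω : Ω), θ 0 ω = ω := by intro ω; rw [hθ0]; rfl
  have hθinv : ∀ (a : ℝ) (ω : Ω), θ a (θ (-a) ω) = ω := by
    intro a ω; rw [hθ, add_neg_cancel, hθid]
  -- iterated contraction
  have hiter : ∀ (n : ℕ) (ω : Ω) (x y : G),
      dist (Φ n ω x) (Φ n ω y) ≤ Real.exp k ^ n * dist x y := by
    intro n
    induction n with
    | zero => intro ω x y; simp [hΦ0]
    | succ n ih =>
      intro ω x y
      have h1 : ∀ z : G, Φ ((n + 1 : ℕ) : ℝ) ω z = Φ 1 (θ n ω) (Φ n ω z) := by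
        intro z
        push_cast
        rw [hcoc n 1 n.cast_nonneg zero_le_one]
      rw [h1, h1]
      calc dist (Φ 1 (θ n ω) (Φ n ω x)) (Φ 1 (θ n ω) (Φ n ω y))
          ≤ Real.exp k * dist (Φ n ω x) (Φ n ω y) := hcontr _ _ _
        _ ≤ Real.exp k * (Real.exp k ^ n * dist x y) := by
            exact mul_le_mul_of_nonneg_left (ih ω x y) hek0
        _ = Real.exp k ^ (n + 1) * dist x y := by ring
  -- the approximating sequence
  set f : ℕ → Ω → G := fun n ω => Φ n (θ (-(n : ℝ)) ω) x₀ with hf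
  have hstep : ∀ (n : ℕ) (ω : Ω), dist (f n ω) (f (n + 1) ω) ≤ M * Real.exp k ^ n := by
    intro n ω
    have h1 : f (n + 1) ω = Φ n (θ (-(n : ℝ)) ω) (Φ 1 (θ (-((n : ℝ) + 1)) ω) x₀) := by
      have e1 : ((n + 1 : ℕ) : ℝ) = 1 + (n : ℝ) := by push_cast; ring
      have e2 : θ (1 : ℝ) (θ (-((n : ℝ) + 1)) ω) = θ (-(n : ℝ)) ω := by
        rw [hθ]; ring_nf
      simp only [hf, e1]
      rw [hcoc 1 n zero_le_one n.cast_nonneg,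
        show -(1 + (n : ℝ)) = -((n : ℝ) + 1) from by ring, e2]
    rw [h1]
    calc dist (Φ n (θ (-(n : ℝ)) ω) x₀) (Φ n (θ (-(n : ℝ)) ω) (Φ 1 (θ (-((n : ℝ) + 1)) ω) x₀))
        ≤ Real.exp k ^ n * dist x₀ (Φ 1 (θ (-((n : ℝ) + 1)) ω) x₀) := hiter _ _ _ _
      _ ≤ Real.exp k ^ n * M := mul_le_mul_of_nonneg_left (hbdd _ _) (pow_nonneg hek0 n)
      _ = M * Real.exp k ^ n := by ring
  have hcauchy : ∀ ω : Ω, CauchySeq (fun n => f n ω) := fun ω =>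
    cauchySeq_of_le_geometric (Real.exp k) M hek (fun n => hstep n ω)
  choose γ hγ using fun ω : Ω => cauchySeq_tendsto_of_complete (hcauchy ω)
  refine ⟨γ, fun t ht ω => ?_⟩
  -- key estimate: Φ t ω (f n ω) is close to f n (θ t ω)
  have hkey : ∀ n : ℕ, dist (Φ t ω (f n ω)) (f n (θ t ω)) ≤ Real.exp k ^ n * M := by
    intro n
    have hA : Φ t ω (f n ω) = Φ ((n : ℝ) + t) (θ (-(n : ℝ)) ω) x₀ := by
      rw [hcoc n t n.cast_nonneg ht, hθinv]
    have hB : Φ ((n : ℝ) + t) (θ (-(n : ℝ)) ω) x₀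
        = Φ n (θ (t - n) ω) (Φ t (θ (-(n : ℝ)) ω) x₀) := by
      rw [add_comm, hcoc t n ht n.cast_nonneg, hθ]
      ring_nf
    have hC : f n (θ t ω) = Φ n (θ (t - n) ω) x₀ := by
      simp only [hf]
      rw [hθ]
      ring_nf
    rw [hA, hB, hC]
    calc dist (Φ n (θ (t - n) ω) (Φ t (θ (-(n : ℝ)) ω) x₀)) (Φ n (θ (t - n) ω) x₀)
        ≤ Real.exp k ^ n * dist (Φ t (θ (-(n : ℝ)) ω) x₀) x₀ := hiter _ _ _ _
      _ ≤ Real.exp k ^ n * M := mul_le_mul_of_nonneg_left (hbdd _ _) (pow_nonneg hek0 n)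
  have hlim1 : Tendsto (fun n => Φ t ω (f n ω)) atTop (𝓝 (Φ t ω (γ ω))) :=
    ((hcont t ht ω).tendsto (γ ω)).comp (hγ ω)
  have hdist0 : Tendsto (fun n : ℕ => dist (f n (θ t ω)) (Φ t ω (f n ω))) atTop (𝓝 0) := by
    have hb : Tendsto (fun n : ℕ => Real.exp k ^ n * M) atTop (𝓝 0) := by
      have := tendsto_pow_atTop_nhds_zero_of_lt_one hek0 hek
      simpa using this.mul_const M
    refine squeeze_zero (fun n => dist_nonneg) (fun n => ?_) hb
    rw [dist_comm]; exact hkey n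
  have hlim2 : Tendsto (fun n => Φ t ω (f n ω)) atTop (𝓝 (γ (θ t ω))) :=
    (hγ (θ t ω)).congr_dist hdist0
  exact tendsto_nhds_unique hlim1 hlim2
end

section
/- The generalized fixed point is unique: if γ* and γ̄* are maps Ω → G satisfying Φ(t, ω, γ*(ω)) = γ*(θ_t ω) and Φ(t, ω, γ̄*(ω)) = γ̄*(θ_t ω) for all t ≥ 0 and ω ∈ Ω, then γ*(ω) = γ̄*(ω) for every ω ∈ Ω. -/
/-- Uniqueness of the generalized fixed point of the cocycle `Φ` over the flow `θ`. -/
theorem generalized_fixed_point_unique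
    {Ω G : Type*} [MetricSpace G] [CompleteSpace G]
    (θ : ℝ → Ω → Ω) (Φ : ℝ → Ω → G → G)
    (hθ0 : θ 0 = id)
    (hθadd : ∀ t s : ℝ, θ (t + s) = θ t ∘ θ s)
    (M : ℝ) (hM : 0 ≤ M) (hbdd : ∀ x y : G, dist x y ≤ M)
    (hΦ0 : ∀ (ω : Ω) (x : G), Φ 0 ω x = x)
    (hcoc : ∀ t₁ t₂ : ℝ, 0 ≤ t₁ → 0 ≤ t₂ → ∀ (ω : Ω) (x : G),
      Φ (t₁ + t₂) ω x = Φ t₂ (θ t₁ ω) (Φ t₁ ω x))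
    (hcont : ∀ t : ℝ, 0 ≤ t → ∀ ω : Ω, Continuous fun x : G => Φ t ω x)
    (k : ℝ) (hk : k < 0)
    (hcontr : ∀ (ω : Ω) (x y : G),
      dist (Φ 1 ω x) (Φ 1 ω y) ≤ Real.exp k * dist x y)
    (γ γ' : Ω → G)
    (hγ : ∀ t : ℝ, 0 ≤ t → ∀ ω : Ω, Φ t ω (γ ω) = γ (θ t ω))
    (hγ' : ∀ t : ℝ, 0 ≤ t → ∀ ω : Ω, Φ t ω (γ' ω) = γ' (θ t ω)) :
    ∀ ω : Ω, γ ω = γ' ω := by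
  -- iterated contraction
  have hiter : ∀ n : ℕ, ∀ (ω : Ω) (x y : G),
      dist (Φ n ω x) (Φ n ω y) ≤ Real.exp (k * n) * dist x y := by
    intro n
    induction n with
    | zero => intro ω x y; simp [hΦ0]
    | succ n ih =>
      intro ω x y
      have h1 : ((n : ℝ) + 1) = (n : ℝ) + 1 := rfl
      have hstep : Φ ((n : ℝ) + 1) ω x = Φ 1 (θ n ω) (Φ n ω x) :=
        hcoc n 1 (by positivity) (by norm_num) ω x
      have hstep' : Φ ((n : ℝ) + 1) ω y = Φ 1 (θ n ω) (Φ n ω y) :=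
        hcoc n 1 (by positivity) (by norm_num) ω y
      have : dist (Φ ((n : ℝ) + 1) ω x) (Φ ((n : ℝ) + 1) ω y)
          ≤ Real.exp k * (Real.exp (k * n) * dist x y) := by
        rw [hstep, hstep']
        calc dist (Φ 1 (θ n ω) (Φ n ω x)) (Φ 1 (θ n ω) (Φ n ω y))
            ≤ Real.exp k * dist (Φ n ω x) (Φ n ω y) := hcontr _ _ _
          _ ≤ Real.exp k * (Real.exp (k * n) * dist x y) := by
              exact mul_le_mul_of_nonneg_left (ih ω x y) (Real.exp_pos k).le
      calc dist (Φ (n + 1 : ℕ) ω x) (Φ (n + 1 : ℕ) ω y)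
          = dist (Φ ((n : ℝ) + 1) ω x) (Φ ((n : ℝ) + 1) ω y) := by push_cast; ring_nf
        _ ≤ Real.exp k * (Real.exp (k * n) * dist x y) := this
        _ = Real.exp (k * (n + 1 : ℕ)) * dist x y := by
            rw [← mul_assoc, ← Real.exp_add]; push_cast; ring_nf
  intro ω
  -- for each n, pull back
  have key : ∀ n : ℕ, dist (γ ω) (γ' ω) ≤ Real.exp (k * n) * M := by
    intro n
    set ωn := θ (-(n : ℝ)) ω with hωn
    have hback : θ n ωn = ω := by
      have := congrFun (hθadd n (-(n : ℝ))) ω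
      simp only [add_neg_cancel, hθ0, Function.comp_apply, id_eq] at this
      exact this.symm
    have h1 : Φ n ωn (γ ωn) = γ ω := by rw [hγ n (by positivity) ωn, hback]
    have h2 : Φ n ωn (γ' ωn) = γ' ω := by rw [hγ' n (by positivity) ωn, hback]
    calc dist (γ ω) (γ' ω) = dist (Φ n ωn (γ ωn)) (Φ n ωn (γ' ωn)) := by rw [h1, h2]
      _ ≤ Real.exp (k * n) * dist (γ ωn) (γ' ωn) := hiter n ωn _ _
      _ ≤ Real.exp (k * n) * M :=
          mul_le_mul_of_nonneg_left (hbdd _ _) (Real.exp_pos _).le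
  have hlim : Filter.Tendsto (fun n : ℕ => Real.exp (k * n) * M)
      Filter.atTop (nhds 0) := by
    have h1 : Filter.Tendsto (fun n : ℕ => k * n) Filter.atTop Filter.atBot :=
      Filter.Tendsto.const_mul_atTop_of_neg hk tendsto_natCast_atTop_atTop
    have := (Real.tendsto_exp_atBot.comp h1).mul_const M
    simpa using this
  have hd : dist (γ ω) (γ' ω) ≤ 0 :=
    ge_of_tendsto' hlim (fun n => key n)
  exact dist_le_zero.mp hd
end

section
/- If γ* : Ω → G satisfies Φ(t, ω, γ*(ω)) = γ*(θ_t ω) for all t ≥ 0 and ω ∈ Ω, then for every ω ∈ Ω and every x ∈ G one has the pullback convergence lim_{t → ∞} Φ(t, θ_{−t}ω, x) = γ*(ω) in the metric d. -/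
/-- Pullback convergence towards the generalized fixed point of the cocycle `Φ`. -/
theorem generalized_fixed_point_pullback_convergence
    {Ω G : Type*} [MetricSpace G] [CompleteSpace G]
    (θ : ℝ → Ω → Ω) (Φ : ℝ → Ω → G → G)
    (hθ0 : θ 0 = id)
    (hθadd : ∀ t s : ℝ, θ (t + s) = θ t ∘ θ s)
    (M : ℝ) (hM : 0 ≤ M) (hbdd : ∀ x y : G, dist x y ≤ M)
    (hΦ0 : ∀ (ω : Ω) (x : G), Φ 0 ω x = x)
    (hcoc : ∀ t₁ t₂ : ℝ, 0 ≤ t₁ → 0 ≤ t₂ → ∀ (ω : Ω) (x : G),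
      Φ (t₁ + t₂) ω x = Φ t₂ (θ t₁ ω) (Φ t₁ ω x))
    (hcont : ∀ t : ℝ, 0 ≤ t → ∀ ω : Ω, Continuous fun x : G => Φ t ω x)
    (k : ℝ) (hk : k < 0)
    (hcontr : ∀ (ω : Ω) (x y : G),
      dist (Φ 1 ω x) (Φ 1 ω y) ≤ Real.exp k * dist x y)
    (γ : Ω → G)
    (hγ : ∀ t : ℝ, 0 ≤ t → ∀ ω : Ω, Φ t ω (γ ω) = γ (θ t ω)) :
    ∀ (ω : Ω) (x : G),
      Filter.Tendsto (fun t : ℝ => Φ t (θ (-t) ω) x) Filter.atTop (nhds (γ ω)) := by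
  intro ω x
  -- iterated contraction
  have hiter : ∀ n : ℕ, ∀ (ω' : Ω) (a b : G),
      dist (Φ (n : ℝ) ω' a) (Φ (n : ℝ) ω' b) ≤ Real.exp k ^ n * dist a b := by
    intro n
    induction n with
    | zero => intro ω' a b; simp [hΦ0]
    | succ m ih =>
      intro ω' a b
      have h : ((m : ℝ) + 1) = ((m + 1 : ℕ) : ℝ) := by push_cast; ring
      calc dist (Φ ((m + 1 : ℕ) : ℝ) ω' a) (Φ ((m + 1 : ℕ) : ℝ) ω' b)
          = dist (Φ 1 (θ (m : ℝ) ω') (Φ (m : ℝ) ω' a))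
              (Φ 1 (θ (m : ℝ) ω') (Φ (m : ℝ) ω' b)) := by
            rw [← h, hcoc (m : ℝ) 1 (by positivity) zero_le_one ω' a,
              hcoc (m : ℝ) 1 (by positivity) zero_le_one ω' b]
        _ ≤ Real.exp k * dist (Φ (m : ℝ) ω' a) (Φ (m : ℝ) ω' b) := hcontr _ _ _
        _ ≤ Real.exp k * (Real.exp k ^ m * dist a b) := by
            exact mul_le_mul_of_nonneg_left (ih ω' a b) (Real.exp_pos k).le
        _ = Real.exp k ^ (m + 1) * dist a b := by ring
  -- contraction estimate for general t
  have key : ∀ t : ℝ, 0 ≤ t → ∀ (ω' : Ω) (a b : G),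
      dist (Φ t ω' a) (Φ t ω' b) ≤ Real.exp k ^ ⌊t⌋₊ * M := by
    intro t ht ω' a b
    set n := ⌊t⌋₊ with hn
    have hnt : (n : ℝ) ≤ t := Nat.floor_le ht
    have hsplit : t = (t - n) + n := by ring
    have h1 := hcoc (t - n) (n : ℝ) (by linarith) (by positivity) ω' a
    have h2 := hcoc (t - n) (n : ℝ) (by linarith) (by positivity) ω' b
    rw [← hsplit] at h1 h2
    rw [h1, h2]
    calc dist (Φ (n : ℝ) (θ (t - n) ω') (Φ (t - n) ω' a))
          (Φ (n : ℝ) (θ (t - n) ω') (Φ (t - n) ω' b))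
        ≤ Real.exp k ^ n * dist (Φ (t - n) ω' a) (Φ (t - n) ω' b) := hiter n _ _ _
      _ ≤ Real.exp k ^ n * M := by
          exact mul_le_mul_of_nonneg_left (hbdd _ _) (by positivity)
  -- identify γ ω
  have hγid : ∀ t : ℝ, 0 ≤ t → Φ t (θ (-t) ω) (γ (θ (-t) ω)) = γ ω := by
    intro t ht
    rw [hγ t ht]
    have : θ t (θ (-t) ω) = ω := by
      have := congrFun (hθadd t (-t)) ω
      simp only [Function.comp] at this
      rw [← this]
      simp [hθ0]
    rw [this]
  -- squeeze
  rw [Metric.tendsto_atTop]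
  intro ε hε
  have hlim : Filter.Tendsto (fun t : ℝ => Real.exp k ^ ⌊t⌋₊ * M)
      Filter.atTop (nhds 0) := by
    have h1 : Filter.Tendsto (fun n : ℕ => Real.exp k ^ n) Filter.atTop (nhds 0) :=
      tendsto_pow_atTop_nhds_zero_of_lt_one (Real.exp_pos k).le
        (by rw [← Real.exp_zero]; exact Real.exp_lt_exp.2 hk)
    have := (h1.comp (tendsto_nat_floor_atTop (α := ℝ))).mul_const M
    simpa using this
  rw [Metric.tendsto_atTop] at hlim
  obtain ⟨N, hN⟩ := hlim ε hε
  refine ⟨max N 0, fun t ht => ?_⟩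
  have ht0 : 0 ≤ t := le_trans (le_max_right N 0) ht
  have hNt : N ≤ t := le_trans (le_max_left N 0) ht
  have := hN t hNt
  rw [Real.dist_eq, sub_zero] at this
  have hle : dist (Φ t (θ (-t) ω) x) (γ ω) ≤ Real.exp k ^ ⌊t⌋₊ * M := by
    rw [← hγid t ht0]
    exact key t ht0 _ _ _
  calc dist (Φ t (θ (-t) ω) x) (γ ω) ≤ Real.exp k ^ ⌊t⌋₊ * M := hle
    _ ≤ |Real.exp k ^ ⌊t⌋₊ * M| := le_abs_self _
    _ < ε := this
end

section
/- For every natural number n, every ω ∈ Ω and every x ∈ G one has d(Φ(n, θ_{−n}ω, x), Φ(n+1, θ_{−(n+1)}ω, x)) ≤ e^{k n} · d(x, Φ(1, θ_{−(n+1)}ω, x)); consequently, if the metric d is bounded, the sequence n ↦ Φ(n, θ_{−n}ω, x) is a Cauchy sequence in (G, d). -/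
/-- Successive pullback iterates are close, and form a Cauchy sequence when the
metric is bounded. -/
theorem pullback_iterates_cauchy
    {Ω G : Type*} [MetricSpace G]
    (θ : ℝ → Ω → Ω) (Φ : ℝ → Ω → G → G)
    (hθ0 : θ 0 = id)
    (hθadd : ∀ t s : ℝ, θ (t + s) = θ t ∘ θ s)
    (hΦ0 : ∀ (ω : Ω) (x : G), Φ 0 ω x = x)
    (hcoc : ∀ t₁ t₂ : ℝ, 0 ≤ t₁ → 0 ≤ t₂ → ∀ (ω : Ω) (x : G),
      Φ (t₁ + t₂) ω x = Φ t₂ (θ t₁ ω) (Φ t₁ ω x))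
    (k : ℝ) (hk : k < 0)
    (hcontr : ∀ (ω : Ω) (x y : G),
      dist (Φ 1 ω x) (Φ 1 ω y) ≤ Real.exp k * dist x y) :
    (∀ (n : ℕ) (ω : Ω) (x : G),
      dist (Φ (n : ℝ) (θ (-(n : ℝ)) ω) x) (Φ ((n : ℝ) + 1) (θ (-((n : ℝ) + 1)) ω) x)
        ≤ Real.exp (k * n) * dist x (Φ 1 (θ (-((n : ℝ) + 1)) ω) x)) ∧
    ((∃ M : ℝ, ∀ x y : G, dist x y ≤ M) →
      ∀ (ω : Ω) (x : G), CauchySeq (fun n : ℕ => Φ (n : ℝ) (θ (-(n : ℝ)) ω) x)) := by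
  -- n-step contraction
  have hcontrn : ∀ (n : ℕ) (ω : Ω) (x y : G),
      dist (Φ (n : ℝ) ω x) (Φ (n : ℝ) ω y) ≤ Real.exp (k * n) * dist x y := by
    intro n
    induction n with
    | zero =>
      intro ω x y
      simp [hΦ0]
    | succ n ih =>
      intro ω x y
      have h1 : ((n : ℝ) + 1) = (n : ℝ) + 1 := rfl
      have hc := hcoc (n : ℝ) 1 (by positivity) zero_le_one ω
      push_cast
      rw [hc x, hc y]
      calc dist (Φ 1 (θ (n : ℝ) ω) (Φ (n : ℝ) ω x)) (Φ 1 (θ (n : ℝ) ω) (Φ (n : ℝ) ω y))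
          ≤ Real.exp k * dist (Φ (n : ℝ) ω x) (Φ (n : ℝ) ω y) := hcontr _ _ _
        _ ≤ Real.exp k * (Real.exp (k * n) * dist x y) := by
            exact mul_le_mul_of_nonneg_left (ih ω x y) (Real.exp_nonneg k)
        _ = Real.exp (k * (n + 1)) * dist x y := by
            rw [← mul_assoc, ← Real.exp_add]; ring_nf
  -- key decomposition
  have hdecomp : ∀ (n : ℕ) (ω : Ω) (x : G),
      Φ ((n : ℝ) + 1) (θ (-((n : ℝ) + 1)) ω) x
        = Φ (n : ℝ) (θ (-(n : ℝ)) ω) (Φ 1 (θ (-((n : ℝ) + 1)) ω) x) := by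
    intro n ω x
    have h1 : ((n : ℝ) + 1) = 1 + (n : ℝ) := by ring
    rw [h1, hcoc 1 (n : ℝ) zero_le_one (by positivity)]
    congr 1
    have : θ 1 (θ (-(1 + (n : ℝ))) ω) = θ (1 + -(1 + (n : ℝ))) ω := by
      rw [hθadd]; rfl
    rw [this]
    norm_num
  have part1 : ∀ (n : ℕ) (ω : Ω) (x : G),
      dist (Φ (n : ℝ) (θ (-(n : ℝ)) ω) x) (Φ ((n : ℝ) + 1) (θ (-((n : ℝ) + 1)) ω) x)
        ≤ Real.exp (k * n) * dist x (Φ 1 (θ (-((n : ℝ) + 1)) ω) x) := by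
    intro n ω x
    rw [hdecomp n ω x]
    exact hcontrn n _ x _
  refine ⟨part1, ?_⟩
  rintro ⟨M, hM⟩ ω x
  apply cauchySeq_of_le_geometric (Real.exp k) M (Real.exp_lt_one_iff.mpr hk)
  intro n
  push_cast
  calc dist (Φ (n : ℝ) (θ (-(n : ℝ)) ω) x) (Φ ((n : ℝ) + 1) (θ (-((n : ℝ) + 1)) ω) x)
      ≤ Real.exp (k * n) * dist x (Φ 1 (θ (-((n : ℝ) + 1)) ω) x) := part1 n ω x
    _ ≤ Real.exp (k * n) * M := by
        exact mul_le_mul_of_nonneg_left (hM _ _) (Real.exp_nonneg _)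
    _ = M * Real.exp k ^ n := by
        rw [← Real.exp_nat_mul]; ring_nf
end

section
/- For every real t ≥ 0, every ω ∈ Ω and every x ∈ G one has d(Φ(t, θ_{−t}ω, x), Φ(⌊t⌋, θ_{−⌊t⌋}ω, x)) ≤ e^{k ⌊t⌋} · d(Φ(t − ⌊t⌋, θ_{−t}ω, x), x), where ⌊t⌋ denotes the integer part of t. -/
/-- Comparison of the pullback iterate at time `t` with the one at the integer
part `⌊t⌋` of `t`. -/
theorem pullback_floor_estimate
    {Ω G : Type*} [MetricSpace G]
    (θ : ℝ → Ω → Ω) (Φ : ℝ → Ω → G → G)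
    (hθ0 : θ 0 = id)
    (hθadd : ∀ t s : ℝ, θ (t + s) = θ t ∘ θ s)
    (hΦ0 : ∀ (ω : Ω) (x : G), Φ 0 ω x = x)
    (hcoc : ∀ t₁ t₂ : ℝ, 0 ≤ t₁ → 0 ≤ t₂ → ∀ (ω : Ω) (x : G),
      Φ (t₁ + t₂) ω x = Φ t₂ (θ t₁ ω) (Φ t₁ ω x))
    (k : ℝ) (hk : k < 0)
    (hcontr : ∀ (ω : Ω) (x y : G),
      dist (Φ 1 ω x) (Φ 1 ω y) ≤ Real.exp k * dist x y) :
    ∀ t : ℝ, 0 ≤ t → ∀ (ω : Ω) (x : G),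
      dist (Φ t (θ (-t) ω) x) (Φ (⌊t⌋ : ℝ) (θ (-(⌊t⌋ : ℝ)) ω) x)
        ≤ Real.exp (k * (⌊t⌋ : ℝ)) * dist (Φ (t - (⌊t⌋ : ℝ)) (θ (-t) ω) x) x := by
  -- iterate contraction for natural times
  have key : ∀ n : ℕ, ∀ (ω : Ω) (a b : G),
      dist (Φ (n : ℝ) ω a) (Φ (n : ℝ) ω b) ≤ Real.exp (k * n) * dist a b := by
    intro n
    induction n with
    | zero =>
      intro ω a b
      simp [hΦ0]
    | succ n ih =>
      intro ω a b
      have hco : ∀ c : G, Φ ((n : ℝ) + 1) ω c = Φ 1 (θ (n : ℝ) ω) (Φ (n : ℝ) ω c) :=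
        fun c => hcoc (n : ℝ) 1 (by positivity) zero_le_one ω c
      have : dist (Φ ((n : ℝ) + 1) ω a) (Φ ((n : ℝ) + 1) ω b)
          ≤ Real.exp k * (Real.exp (k * n) * dist a b) := by
        rw [hco a, hco b]
        calc dist (Φ 1 (θ (n : ℝ) ω) (Φ (n : ℝ) ω a)) (Φ 1 (θ (n : ℝ) ω) (Φ (n : ℝ) ω b))
            ≤ Real.exp k * dist (Φ (n : ℝ) ω a) (Φ (n : ℝ) ω b) := hcontr _ _ _
          _ ≤ Real.exp k * (Real.exp (k * n) * dist a b) := by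
              exact mul_le_mul_of_nonneg_left (ih ω a b) (Real.exp_pos k).le
      calc dist (Φ ((n + 1 : ℕ) : ℝ) ω a) (Φ ((n + 1 : ℕ) : ℝ) ω b)
          = dist (Φ ((n : ℝ) + 1) ω a) (Φ ((n : ℝ) + 1) ω b) := by push_cast; ring_nf
        _ ≤ Real.exp k * (Real.exp (k * n) * dist a b) := this
        _ = Real.exp (k * ((n + 1 : ℕ) : ℝ)) * dist a b := by
            rw [← mul_assoc, ← Real.exp_add]; push_cast; ring_nf
  intro t ht ω x
  set n : ℕ := ⌊t⌋.toNat with hn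
  have hfloor : (⌊t⌋ : ℝ) = (n : ℝ) := by
    rw [hn]
    exact_mod_cast (Int.toNat_of_nonneg (Int.floor_nonneg.mpr ht)).symm
  set s : ℝ := t - (⌊t⌋ : ℝ) with hs
  have hs0 : 0 ≤ s := sub_nonneg.mpr (Int.floor_le t)
  have hsplit : Φ t (θ (-t) ω) x = Φ ((n : ℝ)) (θ (-(⌊t⌋ : ℝ)) ω) (Φ s (θ (-t) ω) x) := by
    have h1 : t = s + (n : ℝ) := by rw [hs, hfloor]; ring
    have h2 : θ s (θ (-t) ω) = θ (-(⌊t⌋ : ℝ)) ω := by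
      have := hθadd s (-t)
      calc θ s (θ (-t) ω) = θ (s + -t) ω := by rw [this]; rfl
        _ = θ (-(⌊t⌋ : ℝ)) ω := by rw [hs]; ring_nf
    calc Φ t (θ (-t) ω) x = Φ (s + (n : ℝ)) (θ (-t) ω) x := by rw [← h1]
      _ = Φ ((n : ℝ)) (θ s (θ (-t) ω)) (Φ s (θ (-t) ω) x) :=
          hcoc s (n : ℝ) hs0 (by positivity) _ _
      _ = Φ ((n : ℝ)) (θ (-(⌊t⌋ : ℝ)) ω) (Φ s (θ (-t) ω) x) := by rw [h2]
  have hx : Φ ((⌊t⌋ : ℝ)) (θ (-(⌊t⌋ : ℝ)) ω) x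
      = Φ ((n : ℝ)) (θ (-(⌊t⌋ : ℝ)) ω) x := by rw [hfloor]
  rw [hsplit, hx, hfloor]
  exact key n _ _ _
end

section
/- Let T > 0 and let W, V : ℝ → ℝ be functions that are differentiable at every t ∈ [0, T] and satisfy, for every t ∈ [0, T], the system W′(t) = (λ̂ + z(t) − L)·W(t) − L·V(t), V′(t) = (λ̌ + z(t) + L)·V(t) + L·W(t), together with the boundary conditions W(T) = 1 and V(0) = e₊^{−1}·W(0). Then W(0) = exp(−λ₊ T − ∫₀ᵀ z(τ) dτ) and V(T) = e₊^{−1}. -/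
/-!
Writing the system as `(W, V)' = (z + M) (W, V)` with `M = [[λ̂ - L, -L], [L, λ̌ + L]]`,
the number `λ₊` is an eigenvalue of `M` with eigenvector `(1, e₊⁻¹)`. The scalar part `z` does
not move the eigenline, so `V - e₊⁻¹ W` solves a scalar linear equation and vanishes
identically once it vanishes at `0`. On the eigenline `W' = (λ₊ + z) W`, which integrates
explicitly, and `W(T) = 1` determines `W(0)`.
-/

open Real Set

theorem eq_mul_exp_sub_of_hasDerivAt_mul {f k K : ℝ → ℝ} {a b : ℝ}
    (hK : ∀ t ∈ Icc a b, HasDerivAt K (k t) t)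
    (hf : ∀ t ∈ Icc a b, HasDerivAt f (k t * f t) t) :
    ∀ t ∈ Icc a b, f t = f a * exp (K t - K a) := by
  set g : ℝ → ℝ := fun t => f t * exp (-K t)
  have hg : ∀ t ∈ Icc a b, HasDerivAt g 0 t := fun t ht =>
    ((hf t ht).mul (hK t ht).neg.exp).congr_deriv (by ring)
  have hg_const : ∀ t ∈ Icc a b, g t = g a :=
    constant_of_has_deriv_right_zero (fun t ht => (hg t ht).continuousAt.continuousWithinAt)
      fun t ht => (hg t (Ico_subset_Icc_self ht)).hasDerivWithinAt
  intro t ht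
  calc f t = g t * exp (K t) := by rw [mul_assoc, ← exp_add, neg_add_cancel, exp_zero, mul_one]
    _ = f a * exp (K t - K a) := by rw [hg_const t ht, sub_eq_neg_add, exp_add]; ring

/-- A solution of `(W, V)' = (z + [[a, p], [q, b]]) (W, V)` starting on the eigenline spanned by
`(1, m)`, with eigenvalue `r`, stays on it and grows like `exp (r t + ∫ z)`. -/
theorem eigenline_solution {a b p q r m T : ℝ} {z Z W V : ℝ → ℝ}
    (hr : a + p * m = r) (hm : q + b * m = r * m)
    (hZ : ∀ t ∈ Icc 0 T, HasDerivAt Z (z t) t)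
    (hWV : ∀ t ∈ Icc 0 T,
      HasDerivAt W ((a + z t) * W t + p * V t) t ∧ HasDerivAt V ((b + z t) * V t + q * W t) t)
    (hV0 : V 0 = m * W 0) :
    ∀ t ∈ Icc 0 T, V t = m * W t ∧ W t = W 0 * exp (r * t + (Z t - Z 0)) := by
  have hlin : ∀ s : ℝ, ∀ t ∈ Icc 0 T, HasDerivAt (fun u => s * u + Z u) (s + z t) t :=
    fun s t ht => ((hasDerivAt_id t).const_mul s).add (hZ t ht) |>.congr_deriv (by simp)
  have hVW : ∀ t ∈ Icc 0 T, V t = m * W t := by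
    have hU := eq_mul_exp_sub_of_hasDerivAt_mul (f := fun t => V t - m * W t) (hlin (b - m * p))
      fun t ht => ((hWV t ht).2.sub ((hWV t ht).1.const_mul m)).congr_deriv
        (by linear_combination W t * hm - m * W t * hr)
    intro t ht
    simpa [hV0, sub_eq_zero] using hU t ht
  have hW := eq_mul_exp_sub_of_hasDerivAt_mul (hlin r) fun t ht =>
    (hWV t ht).1.congr_deriv (by rw [hVW t ht]; linear_combination W t * hr)
  refine fun t ht => ⟨hVW t ht, ?_⟩
  rw [hW t ht]
  ring_nf

theorem eigenvector_of_discrim_nonneg {a b L r : ℝ} (hL : L ≠ 0)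
    (hdisc : 4 * L ^ 2 ≤ (a - b) ^ 2) (hr : r = (a + b + √((a - b) ^ 2 - 4 * L ^ 2)) / 2) :
    a + -L * ((a - r) / L) = r ∧ L + b * ((a - r) / L) = r * ((a - r) / L) := by
  have hsq : √((a - b) ^ 2 - 4 * L ^ 2) ^ 2 = (a - b) ^ 2 - 4 * L ^ 2 :=
    sq_sqrt (by linarith)
  generalize √((a - b) ^ 2 - 4 * L ^ 2) = s at hr hsq
  subst hr
  constructor
  · field_simp; ring
  · field_simp
    linear_combination hsq

theorem boundary_value_problem_solution_general
    (lhat lcheck L : ℝ) (hL : 0 < L)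
    (hgap : lhat - lcheck > 4 * L)
    (D lp ep : ℝ)
    (hD : D = (lhat - lcheck) * (lhat - lcheck - 4 * L))
    (hlp : lp = (lhat + lcheck + Real.sqrt D) / 2)
    (hep : ep = L / (lhat - L - lp))
    (z : ℝ → ℝ) (hz : Continuous z)
    (T : ℝ) (hT : 0 < T)
    (W V : ℝ → ℝ)
    (hWV : ∀ t ∈ Set.Icc (0:ℝ) T,
      HasDerivAt W ((lhat + z t - L) * W t - L * V t) t ∧
      HasDerivAt V ((lcheck + z t + L) * V t + L * W t) t)
    (hWT : W T = 1)
    (hV0 : V 0 = ep⁻¹ * W 0) :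
    W 0 = Real.exp (-(lp * T) - ∫ τ in (0:ℝ)..T, z τ) ∧ V T = ep⁻¹ := by
  have hdisc : 4 * L ^ 2 ≤ ((lhat - L) - (lcheck + L)) ^ 2 := by nlinarith
  have hlp' :
      lp = ((lhat - L) + (lcheck + L) + √(((lhat - L) - (lcheck + L)) ^ 2 - 4 * L ^ 2)) / 2 := by
    rw [hlp, hD]; ring_nf
  have hep_inv : ep⁻¹ = (lhat - L - lp) / L := by rw [hep, inv_div]
  obtain ⟨hr, hm⟩ := eigenvector_of_discrim_nonneg hL.ne' hdisc hlp'
  rw [← hep_inv] at hr hm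
  have hZ : ∀ t ∈ Icc 0 T, HasDerivAt (fun u => ∫ τ in (0:ℝ)..u, z τ) (z t) t :=
    fun t _ => intervalIntegral.integral_hasDerivAt_right (hz.intervalIntegrable _ _)
      (hz.stronglyMeasurableAtFilter _ _) hz.continuousAt
  have hWV' : ∀ t ∈ Icc 0 T, HasDerivAt W ((lhat - L + z t) * W t + -L * V t) t ∧
      HasDerivAt V ((lcheck + L + z t) * V t + L * W t) t := fun t ht =>
    ⟨(hWV t ht).1.congr_deriv (by ring), (hWV t ht).2.congr_deriv (by ring)⟩
  obtain ⟨hVT, hWT'⟩ := eigenline_solution hr hm hZ hWV' hV0 T (right_mem_Icc.mpr hT.le)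
  refine ⟨?_, by rw [hVT, hWT, mul_one]⟩
  rw [hWT, intervalIntegral.integral_same, sub_zero] at hWT'
  rw [← neg_add', exp_neg]
  exact eq_inv_of_mul_eq_one_left hWT'.symm

/-- Solving the boundary value problem for the linear comparison system with
`W(T) = 1` and `V(0) = e₊⁻¹ W(0)` yields `W(0) = e^{−λ₊ T − ∫₀ᵀ z}` and
`V(T) = e₊⁻¹`. -/
theorem boundary_value_problem_solution
    (lhat lcheck L : ℝ) (hl : lhat > lcheck) (hL : 0 < L)
    (hgap : lhat - lcheck > 4 * L)
    (D lp ep : ℝ)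
    (hD : D = (lhat - lcheck) * (lhat - lcheck - 4 * L))
    (hlp : lp = (lhat + lcheck + Real.sqrt D) / 2)
    (hep : ep = L / (lhat - L - lp))
    (z : ℝ → ℝ) (hz : Continuous z)
    (T : ℝ) (hT : 0 < T)
    (W V : ℝ → ℝ)
    (hWV : ∀ t ∈ Set.Icc (0:ℝ) T,
      HasDerivAt W ((lhat + z t - L) * W t - L * V t) t ∧
      HasDerivAt V ((lcheck + z t + L) * V t + L * W t) t)
    (hWT : W T = 1)
    (hV0 : V 0 = ep⁻¹ * W 0) :
    W 0 = Real.exp (-(lp * T) - ∫ τ in (0:ℝ)..T, z τ) ∧ V T = ep⁻¹ :=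
  boundary_value_problem_solution_general lhat lcheck L hL hgap D lp ep hD hlp hep z hz T hT W V hWV
    hWT hV0
end

section
/- Let C ≥ 0 and let W, V : ℝ → ℝ be functions that are differentiable at every t ∈ [0, 1] and satisfy, for every t ∈ [0, 1], the system W′(t) = (λ̂ + z(t) − L)·W(t) − L·V(t), V′(t) = (λ̌ + z(t) + L)·V(t) + L·W(t), together with the boundary conditions W(1) = 0 and V(0) = e₊^{−1}·W(0) + C. Then V(1) = C · exp(λ₋ + ∫₀¹ z(τ) dτ). In particular, if C = c · exp(−λ₊ − ∫₀¹ z(τ) dτ) for some c ≥ 0, then V(1) = c · e^{λ₋ − λ₊}. -/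
/-!
The row vector `(1, -e₊⁻¹)` is a left eigenvector, for the eigenvalue `λ₋`, of the constant
coefficient matrix of the system, so `Y = V - e₊⁻¹ W` solves the scalar equation
`Y' = (λ₋ + z) Y` and hence `Y 1 = Y 0 · exp (λ₋ + ∫₀¹ z)`. The boundary conditions say exactly
that `Y 0 = C` and `Y 1 = V 1`.
-/

open Real Set

theorem eq_mul_exp_integral_of_hasDerivAt {f g : ℝ → ℝ} {a b : ℝ} (hab : a ≤ b)
    (hg : Continuous g) (hf : ∀ t ∈ Icc a b, HasDerivAt f (g t * f t) t) :
    f b = f a * exp (∫ t in a..b, g t) := by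
  set G : ℝ → ℝ := fun t => f t * exp (-∫ s in a..t, g s)
  have hG : ∀ t ∈ Icc a b, HasDerivAt G 0 t := fun t ht => by
    have hI : HasDerivAt (fun t => -∫ s in a..t, g s) (-g t) t :=
      (hg.integral_hasStrictDerivAt a t).hasDerivAt.neg
    exact ((hf t ht).mul hI.exp).congr_deriv (by ring)
  have hconst : G b = G a := constant_of_has_deriv_right_zero
    (fun t ht => (hG t ht).continuousAt.continuousWithinAt)
    (fun t ht => (hG t (Ico_subset_Icc_self ht)).hasDerivWithinAt) b (right_mem_Icc.2 hab)
  simp only [G, intervalIntegral.integral_same, neg_zero, exp_zero, mul_one] at hconst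
  rw [← hconst, mul_assoc, ← exp_add, neg_add_cancel, exp_zero, mul_one]

theorem add_and_mul_of_eq_quadratic_roots {b c D x y : ℝ} (hD₀ : 0 ≤ D)
    (hD : D = b ^ 2 - 4 * c) (hx : x = (b + √D) / 2) (hy : y = (b - √D) / 2) :
    x + y = b ∧ x * y = c := by
  have hsq : √D ^ 2 = D := sq_sqrt hD₀
  subst hx hy
  constructor
  · ring
  · linear_combination (-1 / 4 : ℝ) * (hsq + hD)

/-- With `s = e₊⁻¹`, these are the two identities saying that `(1, -s)` is a left eigenvector
for `λ₋`. -/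
theorem inv_mul_eq_of_eigenvalues {lhat lcheck L lp lm ep : ℝ} (hL : L ≠ 0)
    (hsum : lp + lm = lhat + lcheck) (hprod : lp * lm = lhat * lcheck + L * (lhat - lcheck))
    (hep : ep = L / (lhat - L - lp)) :
    ep⁻¹ * L = lm - lcheck - L ∧ ep⁻¹ * (lhat - L - lm) = L := by
  have hkey : (lhat - L - lp) * (lhat - L - lm) = L * L := by
    linear_combination hprod - (lhat - L) * hsum
  rw [hep, inv_div]
  constructor
  · rw [div_mul_cancel₀ _ hL]
    linarith
  · rw [div_mul_eq_mul_div, hkey, mul_div_cancel_right₀ _ hL]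

theorem hasDerivAt_sub_mul_of_left_eigenvector {W V : ℝ → ℝ} {t p q L s μ w : ℝ}
    (hW : HasDerivAt W ((p + w - L) * W t - L * V t) t)
    (hV : HasDerivAt V ((q + w + L) * V t + L * W t) t)
    (h₁ : s * L = μ - q - L) (h₂ : s * (p - L - μ) = L) :
    HasDerivAt (fun t => V t - s * W t) ((μ + w) * (V t - s * W t)) t :=
  (hV.sub (hW.const_mul s)).congr_deriv
    (by linear_combination V t * h₁ - W t * h₂)

theorem contraction_boundary_value_problem_general
    (lhat lcheck L : ℝ) (hL : 0 < L)
    (hgap : lhat - lcheck > 4 * L)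
    (D lp lm ep : ℝ)
    (hD : D = (lhat - lcheck) * (lhat - lcheck - 4 * L))
    (hlp : lp = (lhat + lcheck + Real.sqrt D) / 2)
    (hlm : lm = (lhat + lcheck - Real.sqrt D) / 2)
    (hep : ep = L / (lhat - L - lp))
    (z : ℝ → ℝ) (hz : Continuous z)
    (C : ℝ)
    (W V : ℝ → ℝ)
    (hWV : ∀ t ∈ Set.Icc (0:ℝ) 1,
      HasDerivAt W ((lhat + z t - L) * W t - L * V t) t ∧
      HasDerivAt V ((lcheck + z t + L) * V t + L * W t) t)
    (hW1 : W 1 = 0)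
    (hV0 : V 0 = ep⁻¹ * W 0 + C) :
    V 1 = C * Real.exp (lm + ∫ τ in (0:ℝ)..1, z τ) ∧
    (∀ c : ℝ, 0 ≤ c → C = c * Real.exp (-lp - ∫ τ in (0:ℝ)..1, z τ) →
      V 1 = c * Real.exp (lm - lp)) := by
  have hD₀ : 0 ≤ D := by rw [hD]; nlinarith
  obtain ⟨hsum, hprod⟩ := add_and_mul_of_eq_quadratic_roots
    (c := lhat * lcheck + L * (lhat - lcheck)) hD₀ (by rw [hD]; ring) hlp hlm
  obtain ⟨h₁, h₂⟩ := inv_mul_eq_of_eigenvalues hL.ne' hsum hprod hep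
  have hY := eq_mul_exp_integral_of_hasDerivAt zero_le_one (continuous_const.add hz)
    fun t ht => hasDerivAt_sub_mul_of_left_eigenvector (hWV t ht).1 (hWV t ht).2 h₁ h₂
  have hint : ∫ t in (0:ℝ)..1, (lm + z t) = lm + ∫ τ in (0:ℝ)..1, z τ := by
    simp [intervalIntegral.integral_add, hz.intervalIntegrable]
  have hV1 : V 1 = C * exp (lm + ∫ τ in (0:ℝ)..1, z τ) := by
    simpa [hW1, hV0, hint] using hY
  refine ⟨hV1, fun c _ hc => ?_⟩
  rw [hV1, hc, mul_assoc, ← exp_add]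
  ring_nf

/-- Boundary value problem on `[0,1]` with `W(1) = 0` and
`V(0) = e₊⁻¹ W(0) + C`: the solution satisfies `V(1) = C e^{λ₋ + ∫₀¹ z}`;
in particular if `C = c e^{−λ₊ − ∫₀¹ z}` then `V(1) = c e^{λ₋ − λ₊}`. -/
theorem contraction_boundary_value_problem
    (lhat lcheck L : ℝ) (hl : lhat > lcheck) (hL : 0 < L)
    (hgap : lhat - lcheck > 4 * L)
    (D lp lm ep : ℝ)
    (hD : D = (lhat - lcheck) * (lhat - lcheck - 4 * L))
    (hlp : lp = (lhat + lcheck + Real.sqrt D) / 2)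
    (hlm : lm = (lhat + lcheck - Real.sqrt D) / 2)
    (hep : ep = L / (lhat - L - lp))
    (z : ℝ → ℝ) (hz : Continuous z)
    (C : ℝ) (hC : 0 ≤ C)
    (W V : ℝ → ℝ)
    (hWV : ∀ t ∈ Set.Icc (0:ℝ) 1,
      HasDerivAt W ((lhat + z t - L) * W t - L * V t) t ∧
      HasDerivAt V ((lcheck + z t + L) * V t + L * W t) t)
    (hW1 : W 1 = 0)
    (hV0 : V 0 = ep⁻¹ * W 0 + C) :
    V 1 = C * Real.exp (lm + ∫ τ in (0:ℝ)..1, z τ) ∧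
    (∀ c : ℝ, 0 ≤ c → C = c * Real.exp (-lp - ∫ τ in (0:ℝ)..1, z τ) →
      V 1 = c * Real.exp (lm - lp)) :=
  contraction_boundary_value_problem_general lhat lcheck L hL hgap D lp lm ep hD hlp hlm hep z hz C
    W V hWV hW1 hV0
end

section
/- Define ζ : ℝ → ℝ by ζ(t) = −∫_{−∞}^0 e^τ ω(τ + t) dτ + ω(t). Then ζ satisfies the pathwise integral equation of the Langevin equation dz + z dt = dW: for every t ∈ ℝ, ζ(t) = ζ(0) − ∫₀ᵗ ζ(s) ds + ω(t). -/
/-!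
Write `m t = ∫_{-∞}^0 e^τ ω(τ + t) dτ = e^{-t} ∫_{-∞}^t e^u ω(u) du`, so that `ζ = ω - m`.
The growth bound makes `e^u ω(u)` integrable at `-∞`, and the product rule gives `m' = ω - m = ζ`.
Hence `∫₀ᵗ ζ = m t - m 0`, while `ζ 0 = -m 0` because `ω 0 = 0`.
-/

open MeasureTheory Set Filter Asymptotics Real Topology

theorem isBigO_rpow_atBot_of_abs_le_add_rpow {ω : ℝ → ℝ} {C δ : ℝ} (hC : 0 ≤ C) (hδ : 0 ≤ δ)
    (h : ∀ s, |ω s| ≤ C + |s| ^ δ) : ω =O[atBot] fun u => |u| ^ δ := by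
  refine IsBigO.of_bound (C + 1) ?_
  filter_upwards [eventually_le_atBot (-1)] with u hu
  have hone : 1 ≤ |u| ^ δ := one_le_rpow (by rw [abs_of_neg (by linarith)]; linarith) hδ
  rw [norm_eq_abs, norm_of_nonneg (by positivity)]
  nlinarith [h u]

theorem exp_mul_isBigO_exp_half_of_isBigO_rpow {ω : ℝ → ℝ} {p : ℝ}
    (h : ω =O[atBot] fun u => |u| ^ p) :
    (fun u => exp u * ω u) =O[atBot] fun u => exp (u / 2) := by
  have hdecay : Tendsto (fun u : ℝ => |u| ^ p * exp (u / 2)) atBot (𝓝 0) := by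
    refine ((tendsto_rpow_mul_exp_neg_mul_atTop_nhds_zero p (1 / 2) one_half_pos).comp
      tendsto_neg_atBot_atTop).congr' ?_
    filter_upwards [eventually_le_atBot 0] with u hu
    simp only [Function.comp_apply, abs_of_nonpos hu]
    ring_nf
  calc (fun u => exp u * ω u) =O[atBot] fun u => exp u * |u| ^ p := isBigO_refl _ _ |>.mul h
    _ = fun u => exp (u / 2) * (|u| ^ p * exp (u / 2)) := by
      ext u
      rw [mul_left_comm, ← exp_add, add_halves, mul_comm]
    _ =O[atBot] fun u => exp (u / 2) * 1 := isBigO_refl _ _ |>.mul (hdecay.isBigO_one ℝ)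
    _ = fun u => exp (u / 2) := by simp only [mul_one]

theorem integrableOn_exp_mul_Iic_of_isBigO_rpow {ω : ℝ → ℝ} {p : ℝ} (hω : Continuous ω)
    (h : ω =O[atBot] fun u => |u| ^ p) (a : ℝ) :
    IntegrableOn (fun u => exp u * ω u) (Iic a) := by
  have hexp : IntegrableOn (fun u : ℝ => exp (u / 2)) (Iic 0) := by
    simpa only [one_div, inv_mul_eq_div] using integrableOn_exp_mul_Iic one_half_pos 0
  exact ((continuous_exp.mul hω).locallyIntegrable.locallyIntegrableOn _)
    |>.integrableOn_of_isBigO_atBot (exp_mul_isBigO_exp_half_of_isBigO_rpow h)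
      ⟨Iic 0, Iic_mem_atBot 0, hexp⟩

section

variable {E : Type*} [NormedAddCommGroup E] [NormedSpace ℝ E]

theorem setIntegral_Iic_comp_add_right (f : ℝ → E) (a t : ℝ) :
    ∫ τ in Iic a, f (τ + t) = ∫ u in Iic (a + t), f u := by
  simpa only [preimage_add_const_Iic, add_sub_cancel_right] using
    (measurePreserving_add_right volume t).setIntegral_preimage_emb
      (measurableEmbedding_addRight t) f (Iic (a + t))

theorem hasDerivAt_integral_Iic [CompleteSpace E] {f : ℝ → E} (hf : Continuous f)
    (hint : ∀ a, IntegrableOn f (Iic a)) (t : ℝ) :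
    HasDerivAt (fun s => ∫ u in Iic s, f u) (f t) t := by
  have hsplit :
      (fun s => ∫ u in Iic s, f u) = fun s => (∫ u in Iic 0, f u) + ∫ u in 0..s, f u := by
    ext s
    rw [← intervalIntegral.integral_Iic_sub_Iic (hint 0) (hint s), add_sub_cancel]
  rw [hsplit]
  exact (intervalIntegral.integral_hasDerivAt_right (hf.intervalIntegrable _ _)
    hf.aestronglyMeasurable.stronglyMeasurableAtFilter hf.continuousAt).const_add _

end

theorem integral_exp_mul_comp_add (ω : ℝ → ℝ) (t : ℝ) :
    ∫ τ in Iic (0 : ℝ), exp τ * ω (τ + t) = exp (-t) * ∫ u in Iic t, exp u * ω u := by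
  have hexp : ∀ τ, exp τ * ω (τ + t) = exp (-t) * (exp (τ + t) * ω (τ + t)) := fun τ => by
    rw [← mul_assoc, ← exp_add, neg_add_cancel_comm_assoc]
  simp_rw [hexp]
  rw [integral_const_mul, setIntegral_Iic_comp_add_right (fun u => exp u * ω u), zero_add]

theorem hasDerivAt_integral_exp_mul_comp_add {ω : ℝ → ℝ} (hω : Continuous ω)
    (hint : ∀ a, IntegrableOn (fun u => exp u * ω u) (Iic a)) (t : ℝ) :
    HasDerivAt (fun t => ∫ τ in Iic (0 : ℝ), exp τ * ω (τ + t))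
      (ω t - ∫ τ in Iic (0 : ℝ), exp τ * ω (τ + t)) t := by
  simp_rw [integral_exp_mul_comp_add]
  have hcancel : exp (-t) * (exp t * ω t) = ω t := by
    rw [← mul_assoc, ← exp_add, neg_add_cancel, exp_zero, one_mul]
  refine ((hasDerivAt_neg t).exp.mul (hasDerivAt_integral_Iic (by fun_prop) hint t)).congr_deriv ?_
  rw [hcancel]
  ring

theorem ou_solves_langevin_general
    (ω : ℝ → ℝ) (hω : Continuous ω) (hω0 : ω 0 = 0)
    (C δ : ℝ) (hC : 0 ≤ C) (hδ0 : 0 < δ)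
    (hgrowth : ∀ s : ℝ, |ω s| ≤ C + |s| ^ δ)
    (ζ : ℝ → ℝ)
    (hζ : ∀ t : ℝ, ζ t = -(∫ τ in Set.Iic (0:ℝ), Real.exp τ * ω (τ + t)) + ω t) :
    ∀ t : ℝ, ζ t = ζ 0 - (∫ s in (0:ℝ)..t, ζ s) + ω t := by
  set m := fun t => ∫ τ in Iic (0 : ℝ), exp τ * ω (τ + t)
  have hint := integrableOn_exp_mul_Iic_of_isBigO_rpow hω
    (isBigO_rpow_atBot_of_abs_le_add_rpow hC hδ0.le hgrowth)
  have hm : ∀ s, HasDerivAt m (ζ s) s := fun s => by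
    simpa only [hζ s, neg_add_eq_sub] using hasDerivAt_integral_exp_mul_comp_add hω hint s
  have hζ_cont : Continuous ζ := by
    rw [show ζ = fun s => -m s + ω s from funext hζ]
    exact (continuous_iff_continuousAt.2 fun s => (hm s).continuousAt).neg.add hω
  intro t
  have hFTC : ∫ s in (0 : ℝ)..t, ζ s = m t - m 0 :=
    intervalIntegral.integral_eq_sub_of_hasDerivAt (fun s _ => hm s)
      (hζ_cont.intervalIntegrable _ _)
  rw [hFTC, hζ t, hζ 0, hω0]
  ring

/-- The stationary Ornstein–Uhlenbeck path `ζ` solves the pathwise integral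
equation of the Langevin equation `dz + z dt = dW`:
`ζ(t) = ζ(0) − ∫₀ᵗ ζ(s) ds + ω(t)`. -/
theorem ou_solves_langevin
    (ω : ℝ → ℝ) (hω : Continuous ω) (hω0 : ω 0 = 0)
    (C δ : ℝ) (hC : 0 ≤ C) (hδ0 : 0 < δ) (hδ1 : δ < 1)
    (hgrowth : ∀ s : ℝ, |ω s| ≤ C + |s| ^ δ)
    (ζ : ℝ → ℝ)
    (hζ : ∀ t : ℝ, ζ t = -(∫ τ in Set.Iic (0:ℝ), Real.exp τ * ω (τ + t)) + ω t) :
    ∀ t : ℝ, ζ t = ζ 0 - (∫ s in (0:ℝ)..t, ζ s) + ω t :=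
  ou_solves_langevin_general ω hω hω0 C δ hC hδ0 hgrowth ζ hζ
end
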